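/- Let h(w,z) = −(1/√(2π)) ∫_{−∞}^{Re(w)} Li_{1/2}(z e^{(w² − (x + i·Im(w))²)/2}) dx for a complex number w with Re(w) < 0. Then for all such w and all complex z with |z| ≤ 1/2, one has |h(w,z)| ≤ |z|. -/

import Mathlib

/-- The polylogarithm of order `s`, `Li_s(ζ) = ∑_{n ≥ 1} ζⁿ/n^s`. -/
noncomputable def polylog (s : ℝ) (ζ : ℂ) : ℂ :=
  ∑' n : ℕ, ζ ^ (n + 1) / ((((n : ℝ) + 1) ^ s : ℝ) : ℂ)

/-- `h(w,z) = −(1/√(2π)) ∫_{−∞}^{Re w} Li_{1/2}(z e^{(w² − (x + i Im w)²)/2}) dx`. -/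
noncomputable def hfun (w z : ℂ) : ℂ :=
  -(1 / (Real.sqrt (2 * Real.pi) : ℂ)) *
    ∫ x in Set.Iio w.re,
      polylog (1 / 2) (z * Complex.exp ((w ^ 2 - ((x : ℂ) + (w.im : ℂ) * Complex.I) ^ 2) / 2))

/-!
For `|z| ≤ 1/2` the argument of `Li_{1/2}` in `h(w,z)` has modulus `|z| e^{(a² − x²)/2} ≤ 1/2`,
where `a = Re w`, so the series is dominated by a geometric one and
`|Li_{1/2}| ≤ 2 |z| e^{(a² − x²)/2}`.
For `x ≤ a ≤ 0` we have `a² − x² ≤ −(x − a)²`, and the remaining half-line Gaussian integral is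
`√(2π)/2`, which cancels the prefactor `2/√(2π)`.
-/

open MeasureTheory Set Real

theorem norm_polylog_le {s : ℝ} (hs : 0 ≤ s) {ζ : ℂ} (hζ : ‖ζ‖ < 1) :
    ‖polylog s ζ‖ ≤ ‖ζ‖ / (1 - ‖ζ‖) := by
  have hgeom : HasSum (fun n : ℕ => ‖ζ‖ ^ (n + 1)) (‖ζ‖ / (1 - ‖ζ‖)) := by
    simpa only [pow_succ', div_eq_mul_inv] using
      (hasSum_geometric_of_lt_one (norm_nonneg ζ) hζ).mul_left ‖ζ‖
  refine tsum_of_norm_bounded hgeom fun n => ?_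
  have hden : 1 ≤ ((n : ℝ) + 1) ^ s := one_le_rpow (by linarith [n.cast_nonneg (α := ℝ)]) hs
  rw [norm_div, norm_pow, Complex.norm_real, norm_of_nonneg (by positivity)]
  exact div_le_self (by positivity) hden

theorem norm_polylog_le_two_mul {s : ℝ} (hs : 0 ≤ s) {ζ : ℂ} (hζ : ‖ζ‖ ≤ 1 / 2) :
    ‖polylog s ζ‖ ≤ 2 * ‖ζ‖ := by
  refine (norm_polylog_le hs (by linarith)).trans ?_
  rw [div_le_iff₀ (by linarith)]
  nlinarith [norm_nonneg ζ]

theorem norm_exp_half_sq_sub_sq (w : ℂ) (x : ℝ) :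
    ‖Complex.exp ((w ^ 2 - ((x : ℂ) + (w.im : ℂ) * Complex.I) ^ 2) / 2)‖
      = exp ((w.re ^ 2 - x ^ 2) / 2) := by
  rw [Complex.norm_exp]
  congr 1
  simp [sq]

theorem integral_Iio_exp_neg_mul_sq_sub (a b : ℝ) :
    ∫ x in Iio a, exp (-b * (x - a) ^ 2) = √(π / b) / 2 := by
  have hshift := (measurePreserving_add_right (volume : Measure ℝ) a).setIntegral_preimage_emb
    (measurableEmbedding_addRight a) (fun x => exp (-b * (x - a) ^ 2)) (Iio a)
  rw [preimage_add_const_Iio, sub_self] at hshift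
  simp only [add_sub_cancel_right] at hshift
  rw [← hshift, ← integral_Iic_eq_integral_Iio, ← integral_gaussian_Ioi, ← neg_zero,
    ← integral_comp_neg_Iic]
  simp

theorem norm_polylog_mul_exp_le {s : ℝ} (hs : 0 ≤ s) {w z : ℂ} (hw : w.re ≤ 0)
    (hz : ‖z‖ ≤ 1 / 2) {x : ℝ} (hx : x ≤ w.re) :
    ‖polylog s (z * Complex.exp ((w ^ 2 - ((x : ℂ) + (w.im : ℂ) * Complex.I) ^ 2) / 2))‖
      ≤ 2 * ‖z‖ * exp (-(1 / 2) * (x - w.re) ^ 2) := by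
  have hsq : (w.re ^ 2 - x ^ 2) / 2 ≤ -(1 / 2) * (x - w.re) ^ 2 := by nlinarith
  have hexp : exp ((w.re ^ 2 - x ^ 2) / 2) ≤ 1 := exp_le_one_iff.mpr (by nlinarith)
  have hζ : ‖z * Complex.exp ((w ^ 2 - ((x : ℂ) + (w.im : ℂ) * Complex.I) ^ 2) / 2)‖ ≤ 1 / 2 := by
    rw [norm_mul, norm_exp_half_sq_sub_sq]
    exact (mul_le_of_le_one_right (norm_nonneg z) hexp).trans hz
  refine (norm_polylog_le_two_mul hs hζ).trans ?_
  rw [norm_mul, norm_exp_half_sq_sub_sq, ← mul_assoc]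
  gcongr

theorem norm_integral_polylog_mul_exp_le {s : ℝ} (hs : 0 ≤ s) {w z : ℂ} (hw : w.re ≤ 0)
    (hz : ‖z‖ ≤ 1 / 2) :
    ‖∫ x in Iio w.re,
        polylog s (z * Complex.exp ((w ^ 2 - ((x : ℂ) + (w.im : ℂ) * Complex.I) ^ 2) / 2))‖
      ≤ √(2 * π) * ‖z‖ := by
  have hgauss : Integrable fun x : ℝ => 2 * ‖z‖ * exp (-(1 / 2) * (x - w.re) ^ 2) :=
    ((integrable_exp_neg_mul_sq (by norm_num : (0 : ℝ) < 1 / 2)).comp_sub_right w.re).const_mul _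
  have hbound := norm_integral_le_of_norm_le hgauss.integrableOn
    ((ae_restrict_mem measurableSet_Iio).mono fun x hx =>
      norm_polylog_mul_exp_le hs hw hz (le_of_lt hx))
  rw [integral_const_mul, integral_Iio_exp_neg_mul_sq_sub] at hbound
  convert hbound using 1
  rw [show π / (1 / 2) = 2 * π by ring]
  ring

/-- For `Re w < 0` and `|z| ≤ 1/2`, `|h(w,z)| ≤ |z|`. -/
theorem stmt4 (w z : ℂ) (hw : w.re < 0) (hz : ‖z‖ ≤ 1 / 2) :
    ‖hfun w z‖ ≤ ‖z‖ := by
  have hsqrt : 0 < √(2 * π) := by positivity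
  have hprefactor : ‖-(1 / (√(2 * π) : ℂ))‖ = 1 / √(2 * π) := by
    rw [norm_neg, norm_div, norm_one, Complex.norm_real, norm_of_nonneg hsqrt.le]
  calc ‖hfun w z‖ ≤ 1 / √(2 * π) * (√(2 * π) * ‖z‖) := by
        rw [hfun, norm_mul, hprefactor]
        gcongr
        exact norm_integral_polylog_mul_exp_le (by norm_num) hw.le hz
    _ = ‖z‖ := by field_simp
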